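/- The braid group Br_n (with n ≥ 2) admits a presentation with two generators σ₁ and σ, subject to the relations σ₁σⁱσ₁σ⁻ⁱ = σⁱσ₁σ⁻ⁱσ₁ for all i with 2 ≤ i ≤ n/2, and σⁿ = (σσ₁)ⁿ⁻¹. That is, the presented group on two generators with these relations is isomorphic to Br_n, via the map sending σ₁ to the standard Artin generator σ₁ and σ to the product σ₁σ₂⋯σ_{n-1}. -/

import Mathlib

/-- The standard Artin relators for the braid group `Br n`, with generators
`σ_{i+1}` indexed by `i : Fin (n-1)`. -/
def braidRels (n : ℕ) : Set (FreeGroup (Fin (n - 1))) :=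
  {r | ∃ i j : Fin (n - 1), (i : ℕ) + 1 < (j : ℕ) ∧
      r = .of i * .of j * (.of i)⁻¹ * (.of j)⁻¹} ∪
  {r | ∃ (i : ℕ) (h : i + 1 < n - 1),
      r = .of ⟨i, by omega⟩ * .of ⟨i + 1, h⟩ * .of ⟨i, by omega⟩ *
        (.of ⟨i + 1, h⟩ * .of ⟨i, by omega⟩ * .of ⟨i + 1, h⟩)⁻¹}

/-- Artin's two-generator relators: generator `true` is `σ₁`, generator `false` is `σ`. -/
def artinTwoGenRels (n : ℕ) : Set (FreeGroup Bool) :=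
  {r | ∃ i : ℕ, 2 ≤ i ∧ i ≤ n / 2 ∧
      r = .of true * (.of false) ^ i * .of true * ((.of false : FreeGroup Bool) ^ i)⁻¹ *
        ((.of false : FreeGroup Bool) ^ i * .of true * ((.of false : FreeGroup Bool) ^ i)⁻¹ *
          .of true)⁻¹} ∪
  {(.of false : FreeGroup Bool) ^ n * ((.of false * .of true : FreeGroup Bool) ^ (n - 1))⁻¹}

/-!
Write `tᵢ = σⁱ σ₁ σ⁻ⁱ`. In any group `(σ₁ σ)ᵏ = t₀ t₁ ⋯ tₖ₋₁ σᵏ`, and `σσ₁` is conjugate to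
`σ₁σ`, so the relation `σⁿ = (σσ₁)ⁿ⁻¹` says exactly that `σ = t₀ t₁ ⋯ tₙ₋₂`.

In `Br_n`, the braid relations give `δ σᵢ δ⁻¹ = σᵢ₊₁` for `δ = σ₁ ⋯ σₙ₋₁`, so `tᵢ = σᵢ₊₁` for
`σ₁ ↦ σ₁, σ ↦ δ`; then `σ = t₀ ⋯ tₙ₋₂` holds by definition of `δ`, and the commutation
relations are far commutations.

Conversely, in the two-generator group `σⁿ` commutes with `σ` and with `σσ₁`, hence is central,
so `tᵢ` is `n`-periodic and conjugating by powers of `σ` turns the relations `[σ₁, tᵢ] = 1`,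
`2 ≤ i ≤ n/2`, into all far commutations `[tᵢ, tⱼ] = 1`. Writing `σ = t₀ t₁ w` with `w`
commuting with `t₀`, the identity `t₁ σ = σ t₀` becomes the braid relation `t₀ t₁ t₀ = t₁ t₀ t₁`.
So `σᵢ₊₁ ↦ tᵢ` is a homomorphism, inverse to the first one.
-/

variable {G : Type*} [Group G]

def conjPow (s a : G) (i : ℕ) : G := MulAut.conj (s ^ i) a

@[simp] lemma conjPow_zero (s a : G) : conjPow s a 0 = a := by simp [conjPow]

lemma conj_conjPow (s a : G) (i k : ℕ) :
    MulAut.conj (s ^ i) (conjPow s a k) = conjPow s a (i + k) := by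
  simp only [conjPow, pow_add, map_mul, MulAut.mul_apply]

lemma map_conjPow {H : Type*} [Group H] (f : G →* H) (s a : G) (i : ℕ) :
    f (conjPow s a i) = conjPow (f s) (f a) i := by
  simp only [conjPow, MulAut.conj_apply]
  simp only [map_mul, map_inv, map_pow]

lemma mul_pow_eq_prod_conjPow_mul (a s : G) (k : ℕ) :
    (a * s) ^ k = ((List.range k).map (conjPow s a)).prod * s ^ k := by
  induction k with
  | zero => simp
  | succ k ih =>
    rw [pow_succ, ih, List.prod_range_succ, conjPow, MulAut.conj_apply]
    group

lemma pow_eq_mul_pow_sub_one_iff {n : ℕ} (hn : n ≠ 0) (a s : G) :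
    s ^ n = (s * a) ^ (n - 1) ↔ s = ((List.range (n - 1)).map (conjPow s a)).prod := by
  obtain ⟨m, rfl⟩ := Nat.exists_eq_succ_of_ne_zero hn
  set P := ((List.range m).map (conjPow s a)).prod
  have hconj : (s * a) ^ m = s * P * s ^ m * s⁻¹ := by
    rw [show s * a = s * (a * s) * s⁻¹ by group, conj_pow, mul_pow_eq_prod_conjPow_mul]
    simp only [P, mul_assoc]
  rw [Nat.succ_sub_one, hconj, eq_mul_inv_iff_mul_eq, ← pow_succ, pow_succ' s (m + 1),
    mul_assoc s P, mul_right_inj, pow_succ', mul_left_inj]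

structure SatisfiesBraidRelations (m : ℕ) (σ : ℕ → G) : Prop where
  commute : ∀ i j, i + 1 < j → j < m → Commute (σ i) (σ j)
  braid : ∀ i, i + 1 < m → σ i * σ (i + 1) * σ i = σ (i + 1) * σ i * σ (i + 1)

namespace SatisfiesBraidRelations

variable {m : ℕ} {σ : ℕ → G} (h : SatisfiesBraidRelations m σ)
include h

lemma commute_prod_range {i j : ℕ} (hij : i < j) (hj : j < m) :
    Commute ((List.range i).map σ).prod (σ j) :=
  Commute.list_prod_left _ _ fun x hx => by
    obtain ⟨k, hk, rfl⟩ := List.mem_map.1 hx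
    exact h.commute k j (by grind) hj

lemma prod_range_mul {k i : ℕ} (hik : i + 2 ≤ k) (hk : k ≤ m) :
    ((List.range k).map σ).prod * σ i = σ (i + 1) * ((List.range k).map σ).prod := by
  induction k, hik using Nat.le_induction with
  | base =>
    rw [List.prod_range_succ, List.prod_range_succ]
    calc _ = ((List.range i).map σ).prod * (σ i * σ (i + 1) * σ i) := by simp only [mul_assoc]
      _ = ((List.range i).map σ).prod * σ (i + 1) * (σ i * σ (i + 1)) := by
        rw [h.braid i (by omega)]; simp only [mul_assoc]
      _ = _ := by
        rw [(h.commute_prod_range (by omega) (by omega)).eq]; simp only [mul_assoc]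
  | succ k hik ih =>
    rw [List.prod_range_succ, mul_assoc, ← (h.commute i k (by omega) (by omega)).eq,
      ← mul_assoc, ih (by omega), mul_assoc]

lemma conjPow_prod_range {j : ℕ} (hj : j < m) :
    conjPow ((List.range m).map σ).prod (σ 0) j = σ j := by
  induction j with
  | zero => exact conjPow_zero _ _
  | succ j ih =>
    rw [add_comm, ← conj_conjPow _ _ 1, pow_one, ih (by omega), MulAut.conj_apply,
      h.prod_range_mul (by omega) le_rfl, mul_inv_cancel_right, add_comm]

end SatisfiesBraidRelations

section TwoGenerator

variable {n : ℕ} {a s : G}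
  (hcomm : ∀ i, 2 ≤ i → i ≤ n / 2 → Commute a (conjPow s a i))
  (hpow : s ^ n = (s * a) ^ (n - 1))

include hpow in
lemma commute_pow_of_pow_eq_mul_pow : Commute (s ^ n) a := by
  have hsa : Commute (s ^ n) (s * a) := hpow ▸ (Commute.refl _).pow_left _
  simpa only [inv_mul_cancel_left] using ((Commute.refl s).pow_left n).inv_right.mul_right hsa

include hpow in
lemma conjPow_eq_self : conjPow s a n = a := by
  rw [conjPow, MulAut.conj_apply, (commute_pow_of_pow_eq_mul_pow hpow).eq, mul_inv_cancel_right]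

include hpow in
lemma periodic_conjPow : Function.Periodic (conjPow s a) n := fun i => by
  rw [← conj_conjPow, conjPow_eq_self hpow, conjPow]

include hcomm hpow in
lemma commute_conjPow {k : ℕ} (hk : 2 ≤ k) (hkn : k + 2 ≤ n) : Commute a (conjPow s a k) := by
  rcases le_or_gt k (n / 2) with hk' | hk'
  · exact hcomm k hk hk'
  · have h := (hcomm (n - k) (by omega) (by omega)).map (MulAut.conj (s ^ k))
    rw [conj_conjPow, show k + (n - k) = 0 + n by omega, periodic_conjPow hpow,
      conjPow_zero] at h
    exact h.symm

include hcomm hpow in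
lemma braid_self_conjPow_one (hn : 3 ≤ n) :
    a * conjPow s a 1 * a = conjPow s a 1 * a * conjPow s a 1 := by
  obtain ⟨k, rfl⟩ : ∃ k, n = k + 3 := ⟨n - 3, by omega⟩
  set w := ((List.range k).map fun j => conjPow s a (j + 2)).prod
  have hw : Commute a w := Commute.list_prod_right _ _ fun x hx => by
    obtain ⟨j, hj, rfl⟩ := List.mem_map.1 hx
    exact commute_conjPow hcomm hpow (by omega) (by grind)
  have hs : s = a * conjPow s a 1 * w := by
    refine ((pow_eq_mul_pow_sub_one_iff (by omega) a s).1 hpow).trans ?_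
    rw [show k + 3 - 1 = k + 1 + 1 by omega, List.prod_range_succ', List.prod_range_succ']
    simp [w, mul_assoc]
  refine (mul_right_cancel (b := w) ?_).symm
  calc conjPow s a 1 * a * conjPow s a 1 * w = conjPow s a 1 * (a * conjPow s a 1 * w) := by
        simp only [mul_assoc]
    _ = s * a := by rw [← hs, conjPow, MulAut.conj_apply, pow_one, inv_mul_cancel_right]
    _ = a * conjPow s a 1 * w * a := by rw [← hs]
    _ = a * conjPow s a 1 * a * w := by rw [mul_assoc _ w, ← hw.eq, ← mul_assoc]

include hcomm hpow in
lemma satisfiesBraidRelations_conjPow : SatisfiesBraidRelations (n - 1) (conjPow s a) where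
  commute i j hij hj := by
    have h := (commute_conjPow hcomm hpow (k := j - i) (by omega) (by omega)).map
      (MulAut.conj (s ^ i))
    rwa [conj_conjPow, Nat.add_sub_cancel' (by omega)] at h
  braid i hi := by
    have h := congrArg (MulAut.conj (s ^ i)) (braid_self_conjPow_one hcomm hpow (by omega))
    simp only [map_mul, conj_conjPow] at h
    exact h

end TwoGenerator

lemma PresentedGroup.lift_of_eq_one {α : Type*} {rels : Set (FreeGroup α)} {r : FreeGroup α}
    (hr : r ∈ rels) : FreeGroup.lift (PresentedGroup.of (rels := rels)) r = 1 := by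
  rw [show FreeGroup.lift PresentedGroup.of = PresentedGroup.mk rels from
    FreeGroup.ext_hom _ _ fun _ => rfl]
  exact PresentedGroup.one_of_mem hr

section Relators

variable {n : ℕ}

lemma forall_braidRels_lift_eq_one_iff {f : ℕ → G} :
    (∀ r ∈ braidRels n, FreeGroup.lift (fun i : Fin (n - 1) => f i) r = 1) ↔
      SatisfiesBraidRelations (n - 1) f := by
  constructor
  · intro h
    refine ⟨fun i j hij hj => ?_, fun i hi => ?_⟩
    · simpa only [← commutatorElement_def, map_commutatorElement, FreeGroup.lift_apply_of,
        commutatorElement_eq_one_iff_commute] using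
        h _ (Or.inl ⟨⟨i, by omega⟩, ⟨j, hj⟩, hij, rfl⟩)
    · simpa only [map_mul, map_inv, FreeGroup.lift_apply_of, mul_inv_eq_one] using
        h _ (Or.inr ⟨i, hi, rfl⟩)
  · rintro h r (⟨i, j, hij, rfl⟩ | ⟨i, hi, rfl⟩)
    · simpa only [← commutatorElement_def, map_commutatorElement, FreeGroup.lift_apply_of,
        commutatorElement_eq_one_iff_commute] using h.commute i j hij j.2
    · simpa only [map_mul, map_inv, FreeGroup.lift_apply_of, mul_inv_eq_one] using h.braid i hi

lemma forall_artinTwoGenRels_lift_eq_one_iff {a s : G} :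
    (∀ r ∈ artinTwoGenRels n, FreeGroup.lift (fun b => cond b a s) r = 1) ↔
      (∀ i, 2 ≤ i → i ≤ n / 2 → Commute a (conjPow s a i)) ∧ s ^ n = (s * a) ^ (n - 1) := by
  have hrel (i : ℕ) : a * s ^ i * a * (s ^ i)⁻¹ * (s ^ i * a * (s ^ i)⁻¹ * a)⁻¹ = 1 ↔
      Commute a (conjPow s a i) := by
    rw [mul_inv_eq_one, conjPow, MulAut.conj_apply, Commute, SemiconjBy, ← mul_assoc,
      ← mul_assoc]
  constructor
  · intro h
    refine ⟨fun i hi hin => ?_, ?_⟩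
    · simpa only [map_mul, map_inv, map_pow, FreeGroup.lift_apply_of, cond_true, cond_false,
        hrel] using h _ (Or.inl ⟨i, hi, hin, rfl⟩)
    · simpa only [map_mul, map_inv, map_pow, FreeGroup.lift_apply_of, cond_true, cond_false,
        mul_inv_eq_one] using h _ (Or.inr rfl)
  · rintro ⟨hc, hp⟩ r (⟨i, hi, hin, rfl⟩ | rfl)
    · simpa only [map_mul, map_inv, map_pow, FreeGroup.lift_apply_of, cond_true, cond_false,
        hrel] using hc i hi hin
    · simpa only [map_mul, map_inv, map_pow, FreeGroup.lift_apply_of, cond_true, cond_false,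
        mul_inv_eq_one] using hp

end Relators

section ArtinPresentation
variable (n : ℕ)

local notation "σ₁" => (PresentedGroup.of true : PresentedGroup (artinTwoGenRels n))
local notation "σ" => (PresentedGroup.of false : PresentedGroup (artinTwoGenRels n))

-- `σᵢ₊₁` as a sequence on `ℕ`, padded with `1`, so that indices can be shifted freely.
def braidGen (i : ℕ) : PresentedGroup (braidRels n) := if h : i < n - 1 then .of ⟨i, h⟩ else 1

lemma braidGen_val (i : Fin (n - 1)) : braidGen n i = PresentedGroup.of i := dif_pos i.2

lemma satisfiesBraidRelations_braidGen : SatisfiesBraidRelations (n - 1) (braidGen n) :=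
  forall_braidRels_lift_eq_one_iff.1 fun r hr => by
    simpa only [braidGen_val] using PresentedGroup.lift_of_eq_one hr

lemma artinTwoGenRels_hold :
    (∀ i, 2 ≤ i → i ≤ n / 2 → Commute σ₁ (conjPow σ σ₁ i)) ∧ σ ^ n = (σ * σ₁) ^ (n - 1) := by
  refine forall_artinTwoGenRels_lift_eq_one_iff.1 fun r hr => ?_
  have hof : (fun b => cond b σ₁ σ) = PresentedGroup.of := funext fun b => by cases b <;> rfl
  rw [hof]
  exact PresentedGroup.lift_of_eq_one hr

def braidDelta : PresentedGroup (braidRels n) := ((List.range (n - 1)).map (braidGen n)).prod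

lemma braidDelta_eq_prod_ofFn :
    braidDelta n = (List.ofFn fun i : Fin (n - 1) =>
      (PresentedGroup.of i : PresentedGroup (braidRels n))).prod := by
  rw [braidDelta, List.ofFn_eq_map, ← List.map_coe_finRange_eq_range, List.map_map]
  simp only [Function.comp_def, braidGen_val]

lemma artinTwoGenRels_hold_in_braid (hn : n ≠ 0) :
    ∀ r ∈ artinTwoGenRels n,
      FreeGroup.lift (fun b => cond b (braidGen n 0) (braidDelta n)) r = 1 := by
  have hσ := satisfiesBraidRelations_braidGen n
  refine forall_artinTwoGenRels_lift_eq_one_iff.2 ⟨fun i hi hin => ?_, ?_⟩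
  · rw [braidDelta, hσ.conjPow_prod_range (by omega)]
    exact hσ.commute 0 i (by omega) (by omega)
  · refine (pow_eq_mul_pow_sub_one_iff hn _ _).2 (congrArg List.prod (List.map_congr_left ?_))
    exact fun j hj => (hσ.conjPow_prod_range (List.mem_range.1 hj)).symm

def twoGenToBraid (hn : n ≠ 0) :
    PresentedGroup (artinTwoGenRels n) →* PresentedGroup (braidRels n) :=
  PresentedGroup.toGroup (artinTwoGenRels_hold_in_braid n hn)

lemma braidRels_hold_in_twoGen :
    ∀ r ∈ braidRels n, FreeGroup.lift (fun i : Fin (n - 1) => conjPow σ σ₁ i) r = 1 :=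
  forall_braidRels_lift_eq_one_iff.2 <|
    satisfiesBraidRelations_conjPow (artinTwoGenRels_hold n).1 (artinTwoGenRels_hold n).2

def braidToTwoGen : PresentedGroup (braidRels n) →* PresentedGroup (artinTwoGenRels n) :=
  PresentedGroup.toGroup (braidRels_hold_in_twoGen n)

lemma braidToTwoGen_braidGen {i : ℕ} (hi : i < n - 1) :
    braidToTwoGen n (braidGen n i) = conjPow σ σ₁ i := by
  rw [braidGen, dif_pos hi]
  exact PresentedGroup.toGroup.of _

lemma braidToTwoGen_comp_twoGenToBraid (hn : 2 ≤ n) :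
    (braidToTwoGen n).comp (twoGenToBraid n (by omega)) = MonoidHom.id _ := by
  refine PresentedGroup.ext fun b => ?_
  rw [MonoidHom.comp_apply, twoGenToBraid, PresentedGroup.toGroup.of, MonoidHom.id_apply]
  cases b
  · rw [cond_false, braidDelta, map_list_prod, List.map_map]
    refine (congrArg List.prod (List.map_congr_left fun j hj => ?_)).trans
      ((pow_eq_mul_pow_sub_one_iff (by omega) _ _).1 (artinTwoGenRels_hold n).2).symm
    exact braidToTwoGen_braidGen n (List.mem_range.1 hj)
  · rw [cond_true, braidToTwoGen_braidGen n (by omega), conjPow_zero]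

lemma twoGenToBraid_comp_braidToTwoGen (hn : n ≠ 0) :
    (twoGenToBraid n hn).comp (braidToTwoGen n) = MonoidHom.id _ := by
  refine PresentedGroup.ext fun i => ?_
  rw [MonoidHom.comp_apply, braidToTwoGen, PresentedGroup.toGroup.of, map_conjPow, twoGenToBraid,
    PresentedGroup.toGroup.of, PresentedGroup.toGroup.of, cond_false, cond_true, braidDelta,
    (satisfiesBraidRelations_braidGen n).conjPow_prod_range i.2, braidGen_val, MonoidHom.id_apply]

end ArtinPresentation

theorem artin_two_generator_presentation_of_braid_group (n : ℕ) (hn : 2 ≤ n) :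
    ∃ e : PresentedGroup (artinTwoGenRels n) ≃* PresentedGroup (braidRels n),
      e (.of true) = PresentedGroup.of ⟨0, by omega⟩ ∧
      e (.of false) =
        (List.ofFn (fun i : Fin (n - 1) => (PresentedGroup.of i : PresentedGroup (braidRels n)))).prod := by
  have hn0 : n ≠ 0 := by omega
  refine ⟨(twoGenToBraid n hn0).toMulEquiv (braidToTwoGen n)
    (braidToTwoGen_comp_twoGenToBraid n hn) (twoGenToBraid_comp_braidToTwoGen n hn0), ?_, ?_⟩
  · exact (PresentedGroup.toGroup.of (artinTwoGenRels_hold_in_braid n hn0)).trans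
      (braidGen_val n ⟨0, by omega⟩)
  · exact (PresentedGroup.toGroup.of (artinTwoGenRels_hold_in_braid n hn0)).trans
      (braidDelta_eq_prod_ofFn n)
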